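/- Let 0 ≤ α < 1, 0 ≤ x₁ < x₂ ≤ 1, let 𝓜 = 𝓜_{α,x₁,x₂} be the piecewise linear transformation of [0,1) with maximal invariant set 𝓢. Then: (i) ∅ ≠ 𝓢 ⊆ U if and only if ⟨α + x₂ − x₁⟩ = p/q and x₁ > (q−1)/q, where p/q is a simple fraction for some integers 0 ≤ p < q; and in this case Y(α) = p/q and 𝓢 = ∪_{k=0}^{q−1} [k/q, (k−q+1)/q + x₁). (ii) ∅ ≠ 𝓢 ⊆ V if and only if α = p/q and x₂ < 1/q, where p/q is a simple fraction for some integers 0 ≤ p < q; and in this case Y(α) = p/q and 𝓢 = ∪_{k=0}^{q−1} [x₂ + k/q, (k+1)/q). -/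

import Mathlib

/-- The piecewise linear transformation `𝓜_{α,x₁,x₂}` of the circle `[0,1)`:
`t ↦ ⟨t + α + x₂ - x₁⟩` on `U = [0,x₁)`, identity on `H = [x₁,x₂)`,
and `t ↦ ⟨t + α⟩` on `V = [x₂,1)`. -/
noncomputable def Mmap (α x₁ x₂ : ℝ) (t : ℝ) : ℝ :=
  if t < x₁ then Int.fract (t + α + x₂ - x₁)
  else if t < x₂ then t
  else Int.fract (t + α)

/-- The maximal invariant set `𝓢` of `𝓜_{α,x₁,x₂}`: points of `[0,1)` whose orbit
never enters `H = [x₁,x₂)`. -/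
def Sset (α x₁ x₂ : ℝ) : Set ℝ :=
  {t | t ∈ Set.Ico (0 : ℝ) 1 ∧ ∀ n : ℕ, (Mmap α x₁ x₂)^[n] t ∉ Set.Ico x₁ x₂}

/-- The squeezing map `Y(t) = ⟨|𝓢 ∩ [0,t)| / |𝓢|⟩`. -/
noncomputable def Ymap (α x₁ x₂ : ℝ) (t : ℝ) : ℝ :=
  Int.fract ((MeasureTheory.volume (Sset α x₁ x₂ ∩ Set.Ico 0 t)).toReal /
    (MeasureTheory.volume (Sset α x₁ x₂)).toReal)

/-!
Where the orbit of a point of `𝓢` lives, `𝓜` is a rotation of the circle. If `𝓢 ⊆ V` (resp.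
`𝓢 ⊆ U`), every orbit in `𝓢` is an orbit of the rotation by `α` (resp. `β = α + x₂ - x₁`). An
irrational rotation has dense orbits, while the rotation by `p/q` visits every band
`[k/q, (k+1)/q)` at the same phase `⟨q t⟩`; this forces `x₂ < 1/q` (resp. `x₁ > (q-1)/q`).

Conversely, the points whose phase lies in `[q x₂, 1)` (resp. `[0, q x₁ - q + 1)`) form an
invariant set avoiding `H`. The rotation carries any other point of `𝓢` to the lowest (resp.
highest) band, where one step of `𝓜` shifts its phase by `q (x₂ - x₁)` (resp. `-q (x₂ - x₁)`) and
gives again such a point of `𝓢`; since phases lie in `[0, 1)`, this cannot go on forever.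
-/

open Set MeasureTheory

lemma Int.fract_fract_add (x y : ℝ) : Int.fract (Int.fract x + y) = Int.fract (x + y) := by
  rw [← Int.fract_add_intCast _ ⌊x⌋, add_right_comm, Int.fract_add_floor]

lemma Int.fract_add_fract_right (x y : ℝ) : Int.fract (x + Int.fract y) = Int.fract (x + y) := by
  rw [add_comm, Int.fract_fract_add, add_comm]

lemma Int.fract_natCast_mul_fract (q : ℕ) (z : ℝ) :
    Int.fract (q * Int.fract z) = Int.fract (q * z) := by
  rw [show q * Int.fract z = q * z - ((q * ⌊z⌋ : ℤ) : ℝ) by rw [Int.fract]; push_cast; ring,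
    Int.fract_sub_intCast]

lemma exists_fract_add_nat_mul_mem_Ico {σ a b : ℝ} (hσ : σ ≠ 0) (hσab : |σ| ≤ b - a)
    (ha : 0 ≤ a) (hb : b ≤ 1) (s : ℝ) : ∃ m : ℕ, Int.fract (s + m * σ) ∈ Ico a b := by
  suffices h : ∃ (m : ℕ) (N : ℤ), s + m * σ - N ∈ Ico a (a + |σ|) by
    obtain ⟨m, N, h₁, h₂⟩ := h
    refine ⟨m, ?_⟩
    rw [← Int.fract_sub_intCast, Int.fract_eq_self.2 ⟨by linarith, by linarith⟩]
    exact ⟨h₁, by linarith⟩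
  rcases hσ.lt_or_gt with hneg | hpos
  · have hσ' : 0 < -σ := neg_pos.2 hneg
    set x := (s - ⌊s - a⌋ - a) / -σ
    have hx : 0 ≤ x := div_nonneg (by linarith [Int.floor_le (s - a)]) hσ'.le
    refine ⟨⌊x⌋₊, ⌊s - a⌋, ?_, ?_⟩
    · have := Nat.floor_le hx
      rw [le_div_iff₀ hσ'] at this
      linarith
    · have := Nat.lt_floor_add_one x
      rw [div_lt_iff₀ hσ'] at this
      rw [abs_of_neg hneg]
      linarith
  · set x := (⌈s - a⌉ + a - s) / σ
    have hx : 0 ≤ x := div_nonneg (by linarith [Int.le_ceil (s - a)]) hpos.le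
    refine ⟨⌈x⌉₊, ⌈s - a⌉, ?_, ?_⟩
    · have := Nat.le_ceil x
      rw [div_le_iff₀ hpos] at this
      linarith
    · have := Nat.ceil_lt_add_one hx
      rw [div_add_one hpos.ne', lt_div_iff₀ hpos] at this
      rw [abs_of_pos hpos]
      linarith

lemma Irrational.exists_fract_add_nat_mul_mem_Ico {γ a b : ℝ} (hγ : Irrational γ) (ha : 0 ≤ a)
    (hab : a < b) (hb : b ≤ 1) (t : ℝ) : ∃ n : ℕ, Int.fract (t + n * γ) ∈ Ico a b := by
  obtain ⟨N, hN⟩ := exists_nat_one_div_lt (sub_pos.2 hab)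
  obtain ⟨k, hk, -, hkγ⟩ := Real.exists_nat_abs_mul_sub_round_le γ N.succ_pos
  have hσ : k * γ - round (k * γ) ≠ 0 :=
    sub_ne_zero.2 ((hγ.natCast_mul hk.ne').ne_int _)
  have hN' : (1 : ℝ) / (N.succ + 1) ≤ 1 / (N + 1) :=
    one_div_le_one_div_of_le (by positivity) (by push_cast; linarith)
  obtain ⟨m, hm⟩ := _root_.exists_fract_add_nat_mul_mem_Ico hσ (by linarith) ha hb t
  refine ⟨m * k, ?_⟩
  rwa [show t + m * (k * γ - round (k * γ)) =
      t + ((m * k : ℕ) : ℝ) * γ - ((m * round (k * γ) : ℤ) : ℝ) by push_cast; ring,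
    Int.fract_sub_intCast] at hm

lemma exists_coprime_fract_eq_div {γ : ℝ} (h : ¬ Irrational γ) :
    ∃ p q : ℕ, p < q ∧ p.Coprime q ∧ Int.fract γ = p / q := by
  obtain ⟨r, rfl⟩ : ∃ r : ℚ, (r : ℝ) = γ := not_not.1 h
  rw [← Rat.cast_fract]
  have h₀ := Int.fract_nonneg r
  have h₁ := Int.fract_lt_one r
  generalize Int.fract r = s at h₀ h₁ ⊢
  have hs : (s.num.natAbs : ℤ) = s.num := Int.natAbs_of_nonneg (Rat.num_nonneg.2 h₀)
  refine ⟨s.num.natAbs, s.den, ?_, s.reduced, ?_⟩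
  · have := Rat.num_lt_denom_iff.2 h₁
    omega
  · rw [Rat.cast_def]
    congr
    exact_mod_cast hs.symm

lemma Int.fract_natCast_mul_fract_add_mul_div (n p q : ℕ) (t : ℝ) :
    Int.fract (q * Int.fract (t + n * (p / q))) = Int.fract (q * t) := by
  rcases eq_or_ne q 0 with rfl | hq
  · simp
  rw [Int.fract_natCast_mul_fract, mul_add, mul_left_comm, mul_div_cancel₀ _ (by exact_mod_cast hq),
    ← Nat.cast_mul, Int.fract_add_natCast]

lemma exists_fract_add_nat_mul_div_eq {p q : ℕ} (hcop : p.Coprime q) (t : ℝ) {k : ℕ}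
    (hk : k < q) : ∃ n : ℕ, Int.fract (t + n * (p / q)) = (k + Int.fract (q * t)) / q := by
  have : NeZero q := ⟨by omega⟩
  have hq : (0 : ℝ) < q := by exact_mod_cast this.pos
  set n : ℕ := (((k - ⌊q * t⌋ : ℤ) : ZMod q) * (p : ZMod q)⁻¹).val
  obtain ⟨m, hm⟩ : (q : ℤ) ∣ ⌊q * t⌋ + n * p - k := by
    rw [← ZMod.intCast_zmod_eq_zero_iff_dvd]
    push_cast
    rw [ZMod.natCast_zmod_val, mul_assoc, mul_comm _ (p : ZMod q),
      ZMod.coe_mul_inv_eq_one p hcop]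
    push_cast
    ring
  refine ⟨n, ?_⟩
  have hm' : t + n * (p / q) = (k + Int.fract (q * t)) / q + m := by
    have : (⌊q * t⌋ : ℝ) + n * p - k = q * m := by exact_mod_cast hm
    rw [Int.fract]
    generalize (⌊q * t⌋ : ℝ) = c at this
    field_simp
    linarith
  rw [hm', Int.fract_add_intCast, Int.fract_eq_self]
  have hk' : (k : ℝ) + 1 ≤ q := by exact_mod_cast hk
  constructor
  · positivity
  · rw [div_lt_one hq]
    linarith [Int.fract_lt_one ((q : ℝ) * t)]

lemma eq_fract_mul_div_of_lt_inv {q u : ℝ} (hq : 0 < q) (hu₀ : 0 ≤ u) (hu : u < 1 / q) :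
    u = Int.fract (q * u) / q := by
  rw [Int.fract_eq_self.2 ⟨by positivity, by rwa [lt_div_iff₀' hq] at hu⟩]
  field_simp

lemma eq_sub_one_add_fract_mul_div {q : ℕ} (hq : 0 < q) {u : ℝ} (hu : ((q : ℝ) - 1) / q ≤ u)
    (hu₁ : u < 1) : u = ((q : ℝ) - 1 + Int.fract (q * u)) / q := by
  have hq' : (0 : ℝ) < q := by exact_mod_cast hq
  have hfl : ⌊(q : ℝ) * u⌋ = (q : ℤ) - 1 := by
    rw [Int.floor_eq_iff]
    rw [div_le_iff₀ hq'] at hu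
    push_cast
    constructor <;> nlinarith
  rw [Int.fract, hfl]
  field_simp
  push_cast
  ring

section FractOrbit

variable {f : ℝ → ℝ} {A : Set ℝ} {γ t : ℝ}

lemma iterate_eq_fract_add_mul (hf : ∀ s ∈ A, f s = Int.fract (s + γ)) (ht : t ∈ Ico 0 1)
    {n : ℕ} (hA : ∀ k < n, Int.fract (t + k * γ) ∈ A) : f^[n] t = Int.fract (t + n * γ) := by
  induction n with
  | zero => simpa using (Int.fract_eq_self.2 ht).symm
  | succ n ih =>
    rw [Function.iterate_succ_apply', ih fun k hk => hA k (hk.trans n.lt_succ_self),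
      hf _ (hA n n.lt_succ_self), Int.fract_fract_add]
    push_cast
    ring_nf

lemma fract_add_mul_mem_of_forall_iterate_mem (hf : ∀ s ∈ A, f s = Int.fract (s + γ))
    (ht : t ∈ Ico 0 1) (horb : ∀ n, f^[n] t ∈ A) (n : ℕ) : Int.fract (t + n * γ) ∈ A := by
  induction n using Nat.strong_induction_on with
  | _ n ih => exact iterate_eq_fract_add_mul hf ht ih ▸ horb n

lemma exists_iterate_eq_of_exists_fract_add_mul_eq (hf : ∀ s ∈ A, f s = Int.fract (s + γ))
    (ht : t ∈ Ico 0 1) {y : ℝ} (hy : ∃ n : ℕ, Int.fract (t + n * γ) = y)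
    (hA : ∀ n : ℕ, Int.fract (t + n * γ) ≠ y → Int.fract (t + n * γ) ∈ A) :
    ∃ n, f^[n] t = y := by
  classical
  refine ⟨Nat.find hy, ?_⟩
  rw [iterate_eq_fract_add_mul hf ht fun k hk => hA k (Nat.find_min hy hk)]
  exact Nat.find_spec hy

end FractOrbit

lemma not_of_forall_exists_add_of_mem_Ico {X : Type*} {P : X → Prop} {ψ : X → ℝ} {δ : ℝ}
    (hδ : δ ≠ 0) (hψ : ∀ x, P x → ψ x ∈ Ico 0 1) (hstep : ∀ x, P x → ∃ y, P y ∧ ψ y = ψ x + δ)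
    (x : X) : ¬ P x := by
  intro hx
  have hdrift : ∀ m : ℕ, ∃ y, P y ∧ ψ y = ψ x + m * δ := by
    intro m
    induction m with
    | zero => exact ⟨x, hx, by simp⟩
    | succ m ih =>
      obtain ⟨y, hy, hψy⟩ := ih
      obtain ⟨z, hz, hψz⟩ := hstep y hy
      exact ⟨z, hz, by rw [hψz, hψy]; push_cast; ring⟩
  obtain ⟨m, hm⟩ := exists_nat_gt (1 / |δ|)
  obtain ⟨y, hy, hψy⟩ := hdrift m
  have hmδ : 1 < |m * δ| := by
    rwa [abs_mul, Nat.abs_cast, ← div_lt_iff₀ (abs_pos.2 hδ)]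
  have hx' := hψ x hx
  have hy' := hψ y hy
  rcases lt_abs.1 hmδ with h | h <;> linarith [hx'.1, hx'.2, hy'.1, hy'.2]

lemma mem_Ico_add_div_iff {q a b t : ℝ} (hq : 0 < q) (ha : 0 ≤ a) (hb : b ≤ 1) (k : ℕ) :
    t ∈ Ico ((k + a) / q) ((k + b) / q) ↔ ⌊q * t⌋ = k ∧ Int.fract (q * t) ∈ Ico a b := by
  rw [mem_Ico, mem_Ico, div_le_iff₀' hq, lt_div_iff₀' hq]
  constructor
  · rintro ⟨h₁, h₂⟩
    have hfl : ⌊q * t⌋ = k := by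
      rw [Int.floor_eq_iff]
      push_cast
      constructor <;> linarith
    refine ⟨hfl, ?_⟩
    rw [Int.fract, hfl]
    push_cast
    constructor <;> linarith
  · rintro ⟨hfl, h₁, h₂⟩
    rw [Int.fract, hfl] at h₁ h₂
    push_cast at h₁ h₂
    constructor <;> linarith

def phaseBands (q : ℕ) (a b : ℝ) : Set ℝ :=
  ⋃ k ∈ Finset.range q, Ico ((k + a) / q) ((k + b) / q)

section PhaseBands

variable {q : ℕ} {a b : ℝ}

lemma mem_phaseBands_iff (hq : 0 < q) (ha : 0 ≤ a) (hb : b ≤ 1) {t : ℝ} :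
    t ∈ phaseBands q a b ↔ t ∈ Ico 0 1 ∧ Int.fract (q * t) ∈ Ico a b := by
  have hq' : (0 : ℝ) < q := by exact_mod_cast hq
  simp only [phaseBands, mem_iUnion, Finset.mem_range, exists_prop,
    mem_Ico_add_div_iff hq' ha hb]
  constructor
  · rintro ⟨k, hk, hfl, hφ⟩
    have hk' : (k : ℝ) + 1 ≤ q := by exact_mod_cast hk
    have h₁ := Int.floor_le ((q : ℝ) * t)
    have h₂ := Int.lt_floor_add_one ((q : ℝ) * t)
    rw [hfl] at h₁ h₂
    push_cast at h₁ h₂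
    exact ⟨⟨by nlinarith, by nlinarith⟩, hφ⟩
  · rintro ⟨⟨h₀, h₁⟩, hφ⟩
    have hfl₀ : 0 ≤ ⌊(q : ℝ) * t⌋ := Int.floor_nonneg.2 (by positivity)
    have hflq : ⌊(q : ℝ) * t⌋ < q := Int.floor_lt.2 (by push_cast; nlinarith)
    exact ⟨⌊(q : ℝ) * t⌋.toNat, by omega, by omega, hφ⟩

lemma phaseBands_subset_Ico (hq : 0 < q) : phaseBands q a b ⊆ Ico (a / q) ((q - 1 + b) / q) := by
  have hq' : (0 : ℝ) < q := by exact_mod_cast hq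
  simp only [phaseBands, iUnion_subset_iff, Finset.mem_range]
  intro k hk
  have hk' : (k : ℝ) ≤ q - 1 := by
    rw [le_sub_iff_add_le]
    exact_mod_cast hk
  apply Ico_subset_Ico <;> gcongr
  simp

lemma phaseBands_natCast_mul_one_subset (hq : 0 < q) (x : ℝ) :
    phaseBands q (q * x) 1 ⊆ Ico x 1 := by
  have hq' : (q : ℝ) ≠ 0 := by positivity
  refine (phaseBands_subset_Ico hq).trans_eq ?_
  rw [sub_add_cancel, div_self hq', mul_div_cancel_left₀ _ hq']

lemma phaseBands_zero_natCast_mul_subset (hq : 0 < q) (x : ℝ) :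
    phaseBands q 0 (q * x - q + 1) ⊆ Ico 0 x :=
  (phaseBands_subset_Ico hq).trans_eq (by congr 1 <;> field_simp <;> ring)

lemma phaseBands_natCast_mul_one_eq (hq : 0 < q) (x : ℝ) :
    phaseBands q (q * x) 1 = ⋃ k ∈ Finset.range q, Ico (x + (k : ℝ) / q) (((k : ℝ) + 1) / q) := by
  refine iUnion₂_congr fun k _ => ?_
  rw [add_div, mul_div_cancel_left₀ _ (by positivity), add_comm]

lemma phaseBands_zero_natCast_mul_eq (hq : 0 < q) (x : ℝ) :
    phaseBands q 0 (q * x - q + 1) =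
      ⋃ k ∈ Finset.range q, Ico ((k : ℝ) / q) (((k : ℝ) - q + 1) / q + x) := by
  refine iUnion₂_congr fun k _ => ?_
  congr 1 <;> field_simp <;> ring

lemma div_mem_phaseBands (hq : 0 < q) (hab : a < b) : a / q ∈ phaseBands q a b := by
  simp only [phaseBands, mem_iUnion, Finset.mem_range, exists_prop]
  refine ⟨0, hq, ?_⟩
  simp only [CharP.cast_eq_zero, zero_add]
  exact ⟨le_rfl, by gcongr⟩

lemma mapsTo_fract_add_div_phaseBands (hq : 0 < q) (ha : 0 ≤ a) (hb : b ≤ 1) (p : ℕ) :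
    MapsTo (fun t => Int.fract (t + (p : ℝ) / q)) (phaseBands q a b) (phaseBands q a b) := by
  intro t ht
  rw [mem_phaseBands_iff hq ha hb] at ht ⊢
  refine ⟨⟨Int.fract_nonneg _, Int.fract_lt_one _⟩, ?_⟩
  have := Int.fract_natCast_mul_fract_add_mul_div 1 p q t
  rw [Nat.cast_one, one_mul] at this
  exact this ▸ ht.2

lemma volume_biUnion_Ico_add_div (hq : 0 < q) (ha : 0 ≤ a) (hb : b ≤ 1) (j : ℕ) :
    volume (⋃ k ∈ Finset.range j, Ico ((k + a) / q) ((k + b) / q)) =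
      j * ENNReal.ofReal ((b - a) / q) := by
  have hq' : (0 : ℝ) < q := by exact_mod_cast hq
  have hdisj : Pairwise (Function.onFun Disjoint fun k : ℕ => Ico ((k + a) / q) ((k + b) / q)) := by
    refine (pairwise_disjoint_on _).2 fun i k hik => Set.disjoint_left.2 ?_
    rintro x ⟨-, hx⟩ ⟨hx', -⟩
    have hik' : (i : ℝ) + 1 ≤ k := by exact_mod_cast hik
    have : (i + b) / q ≤ (k + a) / q := div_le_div_of_nonneg_right (by linarith) hq'.le
    linarith
  have hlen : ∀ k : ℕ, volume (Ico ((k + a) / q) ((k + b) / q)) = ENNReal.ofReal ((b - a) / q) :=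
    fun k => by rw [Real.volume_Ico]; ring_nf
  rw [measure_biUnion_finset (hdisj.set_pairwise _) fun _ _ => measurableSet_Ico,
    Finset.sum_congr rfl fun k _ => hlen k, Finset.sum_const, Finset.card_range, nsmul_eq_mul]

end PhaseBands

lemma Ymap_eq_fract_div_of_Sset_eq_phaseBands {α x₁ x₂ a b t : ℝ} {q j : ℕ}
    (hS : Sset α x₁ x₂ = phaseBands q a b) (hq : 0 < q) (ha : 0 ≤ a) (hab : a < b) (hb : b ≤ 1)
    (hjq : j ≤ q) (hjt : (j - 1 + b) / q ≤ t) (htj : t ≤ (j + a) / q) :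
    Ymap α x₁ x₂ t = Int.fract ((j : ℝ) / q) := by
  have hq' : (0 : ℝ) < q := by exact_mod_cast hq
  have hinter : phaseBands q a b ∩ Ico 0 t =
      ⋃ k ∈ Finset.range j, Ico ((k + a) / q) ((k + b) / q) := by
    ext x
    simp only [phaseBands, mem_inter_iff, mem_iUnion, Finset.mem_range, exists_prop, mem_Ico]
    constructor
    · rintro ⟨⟨k, -, hx₁, hx₂⟩, -, hxt⟩
      refine ⟨k, ?_, hx₁, hx₂⟩
      by_contra! hjk
      have : (j + a) / q ≤ (k + a) / q := by gcongr
      linarith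
    · rintro ⟨k, hk, hx₁, hx₂⟩
      have hk' : (k : ℝ) ≤ j - 1 := by
        rw [le_sub_iff_add_le]
        exact_mod_cast hk
      have : (k + b) / q ≤ (j - 1 + b) / q := by gcongr
      exact ⟨⟨k, hk.trans_le hjq, hx₁, hx₂⟩, le_trans (by positivity) hx₁, by linarith⟩
  have hba : 0 < (b - a) / q := div_pos (by linarith) hq'
  rw [Ymap, hS, hinter, phaseBands, volume_biUnion_Ico_add_div hq ha hb,
    volume_biUnion_Ico_add_div hq ha hb, ENNReal.toReal_mul, ENNReal.toReal_mul,
    ENNReal.toReal_natCast, ENNReal.toReal_natCast, ENNReal.toReal_ofReal hba.le,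
    mul_div_mul_right _ _ hba.ne']

section Mmap

variable {α x₁ x₂ : ℝ}

lemma Mmap_of_lt {t : ℝ} (ht : t < x₁) : Mmap α x₁ x₂ t = Int.fract (t + α + x₂ - x₁) :=
  if_pos ht

lemma Mmap_of_le (hx : x₁ ≤ x₂) {t : ℝ} (ht : x₂ ≤ t) : Mmap α x₁ x₂ t = Int.fract (t + α) := by
  rw [Mmap, if_neg (hx.trans ht).not_gt, if_neg ht.not_gt]

lemma mapsTo_Mmap_Ico : MapsTo (Mmap α x₁ x₂) (Ico 0 1) (Ico 0 1) := by
  intro t ht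
  unfold Mmap
  split_ifs
  · exact ⟨Int.fract_nonneg _, Int.fract_lt_one _⟩
  · exact ht
  · exact ⟨Int.fract_nonneg _, Int.fract_lt_one _⟩

lemma mapsTo_Mmap_Sset : MapsTo (Mmap α x₁ x₂) (Sset α x₁ x₂) (Sset α x₁ x₂) :=
  fun _ ht => ⟨mapsTo_Mmap_Ico ht.1, fun n => by
    rw [← Function.iterate_succ_apply]; exact ht.2 (n + 1)⟩

lemma Mmap_eq_fract_add_fract_of_lt {t : ℝ} (ht : t < x₁) :
    Mmap α x₁ x₂ t = Int.fract (t + Int.fract (α + x₂ - x₁)) := by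
  rw [Mmap_of_lt ht, Int.fract_add_fract_right]
  ring_nf

lemma subset_Sset_of_mapsTo {W : Set ℝ} (hW : W ⊆ Ico 0 1) (hWH : Disjoint W (Ico x₁ x₂))
    (hmaps : MapsTo (Mmap α x₁ x₂) W W) : W ⊆ Sset α x₁ x₂ :=
  fun _ ht => ⟨hW ht, fun n => hWH.notMem_of_mem_left (hmaps.iterate n ht)⟩

end Mmap

section Cases

variable {α x₁ x₂ : ℝ}

lemma exists_mem_Sset_fract_mul_eq_add_of_eq_div {p q : ℕ} (hq : 0 < q) (hx : x₁ < x₂)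
    (hcop : p.Coprime q) (hα : α = p / q) (hx₂q : x₂ < 1 / q) {s : ℝ}
    (hs : s ∈ Sset α x₁ x₂) (hφ : Int.fract (q * s) < q * x₂) :
    ∃ s', (s' ∈ Sset α x₁ x₂ ∧ Int.fract (q * s') < q * x₂) ∧
      Int.fract (q * s') = Int.fract (q * s) + q * (x₂ - x₁) := by
  have hq' : (0 : ℝ) < q := by exact_mod_cast hq
  have hqx₂ : q * x₂ < 1 := by rwa [lt_div_iff₀' hq'] at hx₂q
  -- The orbit of `s` rotates through the bands until it reaches the lowest one.
  obtain ⟨n, hn⟩ := exists_iterate_eq_of_exists_fract_add_mul_eq (f := Mmap α x₁ x₂) (A := Ico x₂ 1)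
    (fun u hu => by rw [Mmap_of_le hx.le hu.1, hα]) hs.1
    (by simpa using exists_fract_add_nat_mul_div_eq hcop s hq) fun n hne => by
      refine ⟨?_, Int.fract_lt_one _⟩
      by_contra! hlt
      refine hne ?_
      rw [eq_fract_mul_div_of_lt_inv hq' (Int.fract_nonneg _) (hlt.trans hx₂q),
        Int.fract_natCast_mul_fract_add_mul_div]
  set y := Int.fract (q * s) / q
  have hyS : y ∈ Sset α x₁ x₂ := hn ▸ mapsTo_Mmap_Sset.iterate n hs
  have hqy : q * y = Int.fract (q * s) := mul_div_cancel₀ _ hq'.ne'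
  have hy₁ : y < x₁ := by
    by_contra! h
    exact hyS.2 0 ⟨h, (div_lt_iff₀' hq').2 hφ⟩
  have hphase : Int.fract (q * Mmap α x₁ x₂ y) = Int.fract (q * s) + q * (x₂ - x₁) := by
    have := Int.fract_natCast_mul_fract_add_mul_div 1 p q (y + (x₂ - x₁))
    rw [Nat.cast_one, one_mul, mul_add, hqy] at this
    rw [Mmap_of_lt hy₁, hα, show y + p / q + x₂ - x₁ = y + (x₂ - x₁) + p / q by ring, this,
      Int.fract_eq_self.2 ⟨by nlinarith [Int.fract_nonneg ((q : ℝ) * s)], by nlinarith⟩]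
  exact ⟨Mmap α x₁ x₂ y, ⟨mapsTo_Mmap_Sset hyS, by rw [hphase]; nlinarith⟩, hphase⟩

theorem Sset_eq_phaseBands_of_eq_div {p q : ℕ} (hx₀ : 0 ≤ x₁) (hx : x₁ < x₂)
    (hcop : p.Coprime q) (hα : α = p / q) (hx₂q : x₂ < 1 / q) :
    Sset α x₁ x₂ = phaseBands q (q * x₂) 1 := by
  have hq : 0 < q := Nat.pos_of_ne_zero (by rintro rfl; simp at hx₂q; linarith)
  have hq' : (0 : ℝ) < q := by exact_mod_cast hq
  have hqx₂₀ : 0 ≤ q * x₂ := mul_nonneg hq'.le (hx₀.trans hx.le)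
  have hbandsV := phaseBands_natCast_mul_one_subset hq x₂
  refine Subset.antisymm (fun t ht => ?_) <| subset_Sset_of_mapsTo
    (hbandsV.trans (Ico_subset_Ico_left (hx₀.trans hx.le)))
    (Ico_disjoint_Ico_same.symm.mono_left hbandsV)
    ((mapsTo_fract_add_div_phaseBands hq hqx₂₀ le_rfl p).congr fun u hu => by
      rw [Mmap_of_le hx.le (hbandsV hu).1, hα])
  refine (mem_phaseBands_iff hq hqx₂₀ le_rfl).2 ⟨ht.1, ?_, Int.fract_lt_one _⟩
  by_contra! hlt
  refine not_of_forall_exists_add_of_mem_Ico (ψ := fun s => Int.fract (q * s))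
    (by nlinarith : (q : ℝ) * (x₂ - x₁) ≠ 0)
    (fun s _ => ⟨Int.fract_nonneg _, Int.fract_lt_one _⟩)
    (fun s hs => exists_mem_Sset_fract_mul_eq_add_of_eq_div hq hx hcop hα hx₂q hs.1 hs.2) t
    ⟨ht, hlt⟩

lemma exists_mem_Sset_fract_mul_eq_sub_of_fract_eq_div {p q : ℕ} (hq : 0 < q) (hx : x₁ < x₂)
    (hcop : p.Coprime q) (hβ : Int.fract (α + x₂ - x₁) = p / q)
    (hx₁q : ((q : ℝ) - 1) / q < x₁) {s : ℝ} (hs : s ∈ Sset α x₁ x₂)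
    (hφ : q * x₁ - q + 1 ≤ Int.fract (q * s)) :
    ∃ s', (s' ∈ Sset α x₁ x₂ ∧ q * x₁ - q + 1 ≤ Int.fract (q * s')) ∧
      Int.fract (q * s') = Int.fract (q * s) + -(q * (x₂ - x₁)) := by
  have hq' : (0 : ℝ) < q := by exact_mod_cast hq
  have hL₀ : 0 < q * x₁ - q + 1 := by rw [div_lt_iff₀' hq'] at hx₁q; linarith
  -- The orbit of `s` rotates through the bands until it reaches the highest one.
  obtain ⟨n, hn⟩ := exists_iterate_eq_of_exists_fract_add_mul_eq (f := Mmap α x₁ x₂) (A := Ico 0 x₁)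
    (fun u hu => by rw [Mmap_eq_fract_add_fract_of_lt hu.2, hβ]) hs.1
    (by simpa [Nat.cast_pred hq] using
      exists_fract_add_nat_mul_div_eq hcop s (k := q - 1) (by omega)) fun n hne => by
      refine ⟨Int.fract_nonneg _, ?_⟩
      by_contra! hge
      refine hne ?_
      rw [eq_sub_one_add_fract_mul_div hq (hx₁q.le.trans hge) (Int.fract_lt_one _),
        Int.fract_natCast_mul_fract_add_mul_div]
  set y := ((q : ℝ) - 1 + Int.fract (q * s)) / q
  have hyS : y ∈ Sset α x₁ x₂ := hn ▸ mapsTo_Mmap_Sset.iterate n hs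
  have hqy : q * y = q - 1 + Int.fract (q * s) := mul_div_cancel₀ _ hq'.ne'
  have hy₂ : x₂ ≤ y := by
    by_contra! h
    exact hyS.2 0 ⟨(le_div_iff₀' hq').2 (by linarith), h⟩
  have hphase : Int.fract (q * Mmap α x₁ x₂ y) = Int.fract (q * s) + -(q * (x₂ - x₁)) := by
    have := Int.fract_natCast_mul_fract_add_mul_div 1 p q (y - (x₂ - x₁))
    rw [Nat.cast_one, one_mul, mul_sub, hqy] at this
    rw [Mmap_of_le hx.le hy₂, show y + α = y - (x₂ - x₁) + (α + x₂ - x₁) by ring,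
      ← Int.fract_add_fract_right, hβ, this,
      show (q : ℝ) - 1 + Int.fract (q * s) - q * (x₂ - x₁) =
        Int.fract (q * s) + -(q * (x₂ - x₁)) + ((q - 1 : ℕ) : ℝ) by rw [Nat.cast_pred hq]; ring,
      Int.fract_add_natCast,
      Int.fract_eq_self.2 ⟨by nlinarith, by nlinarith [Int.fract_lt_one ((q : ℝ) * s)]⟩]
  exact ⟨Mmap α x₁ x₂ y, ⟨mapsTo_Mmap_Sset hyS, by rw [hphase]; nlinarith⟩, hphase⟩

theorem Sset_eq_phaseBands_of_fract_eq_div {p q : ℕ} (hq : 0 < q) (hx : x₁ < x₂) (hx₂ : x₂ ≤ 1)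
    (hcop : p.Coprime q) (hβ : Int.fract (α + x₂ - x₁) = p / q)
    (hx₁q : ((q : ℝ) - 1) / q < x₁) :
    Sset α x₁ x₂ = phaseBands q 0 (q * x₁ - q + 1) := by
  have hq' : (0 : ℝ) < q := by exact_mod_cast hq
  have hL₁ : q * x₁ - q + 1 ≤ 1 := by nlinarith
  have hbandsU := phaseBands_zero_natCast_mul_subset hq x₁
  refine Subset.antisymm (fun t ht => ?_) <| subset_Sset_of_mapsTo
    (hbandsU.trans (Ico_subset_Ico_right (hx.le.trans hx₂)))
    (Ico_disjoint_Ico_same.mono_left hbandsU)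
    ((mapsTo_fract_add_div_phaseBands hq le_rfl hL₁ p).congr fun u hu => by
      rw [Mmap_eq_fract_add_fract_of_lt (hbandsU hu).2, hβ])
  refine (mem_phaseBands_iff hq le_rfl hL₁).2 ⟨ht.1, Int.fract_nonneg _, ?_⟩
  by_contra! hge
  refine not_of_forall_exists_add_of_mem_Ico (ψ := fun s => Int.fract (q * s))
    (by nlinarith : -((q : ℝ) * (x₂ - x₁)) ≠ 0)
    (fun s _ => ⟨Int.fract_nonneg _, Int.fract_lt_one _⟩)
    (fun s hs => exists_mem_Sset_fract_mul_eq_sub_of_fract_eq_div hq hx hcop hβ hx₁q hs.1 hs.2) t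
    ⟨ht, hge⟩

theorem Ymap_self_of_eq_div {p q : ℕ} (hx₀ : 0 ≤ x₁) (hx : x₁ < x₂) (hpq : p < q)
    (hcop : p.Coprime q) (hα : α = p / q) (hx₂q : x₂ < 1 / q) : Ymap α x₁ x₂ α = p / q := by
  have hq : 0 < q := Nat.zero_lt_of_lt hpq
  have hq' : (0 : ℝ) < q := by exact_mod_cast hq
  have hqx₂₀ : 0 ≤ q * x₂ := mul_nonneg hq'.le (hx₀.trans hx.le)
  rw [Ymap_eq_fract_div_of_Sset_eq_phaseBands (Sset_eq_phaseBands_of_eq_div hx₀ hx hcop hα hx₂q) hq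
    hqx₂₀ (by rwa [lt_div_iff₀' hq'] at hx₂q) le_rfl hpq.le (by rw [hα, sub_add_cancel])
    (by rw [hα]; gcongr; exact le_add_of_nonneg_right hqx₂₀),
    Int.fract_eq_self.2 ⟨by positivity, by rw [div_lt_one hq']; exact_mod_cast hpq⟩]

theorem Ymap_self_of_fract_eq_div {p q : ℕ} (hα₀ : 0 ≤ α) (hα₁ : α < 1) (hq : 0 < q)
    (hx : x₁ < x₂) (hx₂ : x₂ ≤ 1) (hcop : p.Coprime q) (hβ : Int.fract (α + x₂ - x₁) = p / q)
    (hx₁q : ((q : ℝ) - 1) / q < x₁) : Ymap α x₁ x₂ α = p / q := by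
  have hq' : (0 : ℝ) < q := by exact_mod_cast hq
  have hL₀ : 0 < q * x₁ - q + 1 := by rw [div_lt_iff₀' hq'] at hx₁q; linarith
  obtain ⟨j, hj⟩ : ∃ j : ℕ, (j : ℝ) = q * (α + x₂ - x₁) := by
    have hz : ((p + q * ⌊α + x₂ - x₁⌋ : ℤ) : ℝ) = q * (α + x₂ - x₁) := by
      have h₁ := Int.fract_add_floor (α + x₂ - x₁)
      have h₂ : (q : ℝ) * (p / q) = p := mul_div_cancel₀ _ hq'.ne'
      rw [hβ] at h₁
      push_cast
      linear_combination (q : ℝ) * h₁ - h₂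
    have hz₀ : 0 ≤ p + q * ⌊α + x₂ - x₁⌋ := by
      have : (0 : ℝ) ≤ ((p + q * ⌊α + x₂ - x₁⌋ : ℤ) : ℝ) := by rw [hz]; nlinarith
      exact_mod_cast this
    exact ⟨_, by rw [← hz]; exact_mod_cast Int.toNat_of_nonneg hz₀⟩
  have hjq : j ≤ q := Nat.lt_succ_iff.1 <| by
    have : (j : ℝ) < q + 1 := by rw [hj]; nlinarith
    exact_mod_cast this
  rw [Ymap_eq_fract_div_of_Sset_eq_phaseBands
    (Sset_eq_phaseBands_of_fract_eq_div hq hx hx₂ hcop hβ hx₁q) hq le_rfl hL₀ (by nlinarith) hjq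
    (by rw [div_le_iff₀' hq', hj]; nlinarith) (by rw [add_zero, le_div_iff₀' hq', hj]; nlinarith),
    hj, mul_div_cancel_left₀ _ hq'.ne', hβ]

theorem exists_coprime_eq_div_of_Sset_subset (hα₀ : 0 ≤ α) (hα₁ : α < 1) (hx₀ : 0 ≤ x₁)
    (hx : x₁ < x₂) (hne : (Sset α x₁ x₂).Nonempty) (hsub : Sset α x₁ x₂ ⊆ Ico x₂ 1) :
    ∃ p q : ℕ, p < q ∧ p.Coprime q ∧ α = p / q ∧ x₂ < 1 / q := by
  obtain ⟨t, ht⟩ := hne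
  have horb : ∀ n : ℕ, Int.fract (t + n * α) ∈ Ico x₂ 1 :=
    fract_add_mul_mem_of_forall_iterate_mem (fun s hs => Mmap_of_le hx.le hs.1) ht.1
      fun n => hsub (mapsTo_Mmap_Sset.iterate n ht)
  have hrat : ¬ Irrational α := fun hirr => by
    obtain ⟨n, hn⟩ := hirr.exists_fract_add_nat_mul_mem_Ico le_rfl (hx₀.trans_lt hx)
      ((hsub ht).1.trans (hsub ht).2.le) t
    exact (horb n).1.not_gt hn.2
  obtain ⟨p, q, hpq, hcop, hαpq⟩ := exists_coprime_fract_eq_div hrat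
  rw [Int.fract_eq_self.2 ⟨hα₀, hα₁⟩] at hαpq
  refine ⟨p, q, hpq, hcop, hαpq, ?_⟩
  obtain ⟨n, hn⟩ := exists_fract_add_nat_mul_div_eq hcop t (Nat.zero_lt_of_lt hpq)
  have h := (horb n).1
  rw [hαpq, hn] at h
  exact h.trans_lt (div_lt_div_of_pos_right (by simpa using Int.fract_lt_one ((q : ℝ) * t))
    (by exact_mod_cast Nat.zero_lt_of_lt hpq))

theorem exists_coprime_fract_eq_div_of_Sset_subset (hx : x₁ < x₂) (hx₂ : x₂ ≤ 1)
    (hne : (Sset α x₁ x₂).Nonempty) (hsub : Sset α x₁ x₂ ⊆ Ico 0 x₁) :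
    ∃ p q : ℕ, p < q ∧ p.Coprime q ∧ Int.fract (α + x₂ - x₁) = p / q ∧ ((q : ℝ) - 1) / q < x₁ := by
  obtain ⟨t, ht⟩ := hne
  set γ := Int.fract (α + x₂ - x₁)
  have horb : ∀ n : ℕ, Int.fract (t + n * γ) ∈ Ico 0 x₁ :=
    fract_add_mul_mem_of_forall_iterate_mem
      (fun s hs => Mmap_eq_fract_add_fract_of_lt hs.2) ht.1
      fun n => hsub (mapsTo_Mmap_Sset.iterate n ht)
  have hrat : ¬ Irrational γ := fun hirr => by
    obtain ⟨n, hn⟩ := hirr.exists_fract_add_nat_mul_mem_Ico ((hsub ht).1.trans (hsub ht).2.le)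
      (hx.trans_le hx₂) le_rfl t
    exact (horb n).2.not_ge hn.1
  obtain ⟨p, q, hpq, hcop, hγ⟩ := exists_coprime_fract_eq_div hrat
  replace hγ : γ = p / q := (Int.fract_fract _).symm.trans hγ
  refine ⟨p, q, hpq, hcop, hγ, ?_⟩
  obtain ⟨n, hn⟩ := exists_fract_add_nat_mul_div_eq hcop t (k := q - 1) (by omega)
  have h := (horb n).2
  rw [hγ, hn, Nat.cast_pred (Nat.zero_lt_of_lt hpq)] at h
  exact lt_of_le_of_lt (by gcongr; exact le_add_of_nonneg_right (Int.fract_nonneg _)) h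

end Cases

/-- Characterization of the cases `∅ ≠ 𝓢 ⊆ U` and `∅ ≠ 𝓢 ⊆ V`, with the structure
of `𝓢` and the value of `Y(α)` in each case. -/
theorem maximalInvariantSet_in_U_or_V (α x₁ x₂ : ℝ) (hα0 : 0 ≤ α) (hα1 : α < 1)
    (hx0 : 0 ≤ x₁) (hx : x₁ < x₂) (hx2 : x₂ ≤ 1) :
    (((Sset α x₁ x₂).Nonempty ∧ Sset α x₁ x₂ ⊆ Set.Ico 0 x₁) ↔
      ∃ p q : ℕ, p < q ∧ Nat.Coprime p q ∧
        Int.fract (α + x₂ - x₁) = (p : ℝ) / q ∧ ((q : ℝ) - 1) / q < x₁) ∧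
    (∀ p q : ℕ, p < q → Nat.Coprime p q →
      Int.fract (α + x₂ - x₁) = (p : ℝ) / q → ((q : ℝ) - 1) / q < x₁ →
      Ymap α x₁ x₂ α = (p : ℝ) / q ∧
      Sset α x₁ x₂ = ⋃ k ∈ Finset.range q,
        Set.Ico ((k : ℝ) / q) (((k : ℝ) - q + 1) / q + x₁)) ∧
    (((Sset α x₁ x₂).Nonempty ∧ Sset α x₁ x₂ ⊆ Set.Ico x₂ 1) ↔
      ∃ p q : ℕ, p < q ∧ Nat.Coprime p q ∧ α = (p : ℝ) / q ∧ x₂ < 1 / q) ∧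
    (∀ p q : ℕ, p < q → Nat.Coprime p q → α = (p : ℝ) / q → x₂ < 1 / q →
      Ymap α x₁ x₂ α = (p : ℝ) / q ∧
      Sset α x₁ x₂ = ⋃ k ∈ Finset.range q,
        Set.Ico (x₂ + (k : ℝ) / q) (((k : ℝ) + 1) / q)) := by
  refine ⟨⟨fun h => exists_coprime_fract_eq_div_of_Sset_subset hx hx2 h.1 h.2, ?_⟩, ?_,
    ⟨fun h => exists_coprime_eq_div_of_Sset_subset hα0 hα1 hx0 hx h.1 h.2, ?_⟩, ?_⟩
  · rintro ⟨p, q, hpq, hcop, hβ, hx₁q⟩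
    have hq := Nat.zero_lt_of_lt hpq
    rw [Sset_eq_phaseBands_of_fract_eq_div hq hx hx2 hcop hβ hx₁q]
    rw [div_lt_iff₀' (by positivity)] at hx₁q
    exact ⟨⟨_, div_mem_phaseBands hq (by linarith)⟩, phaseBands_zero_natCast_mul_subset hq x₁⟩
  · intro p q hpq hcop hβ hx₁q
    have hq := Nat.zero_lt_of_lt hpq
    rw [Sset_eq_phaseBands_of_fract_eq_div hq hx hx2 hcop hβ hx₁q,
      phaseBands_zero_natCast_mul_eq hq]
    exact ⟨Ymap_self_of_fract_eq_div hα0 hα1 hq hx hx2 hcop hβ hx₁q, rfl⟩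
  · rintro ⟨p, q, hpq, hcop, hα, hx₂q⟩
    have hq := Nat.zero_lt_of_lt hpq
    rw [Sset_eq_phaseBands_of_eq_div hx0 hx hcop hα hx₂q]
    rw [lt_div_iff₀' (by positivity)] at hx₂q
    exact ⟨⟨_, div_mem_phaseBands hq hx₂q⟩, phaseBands_natCast_mul_one_subset hq x₂⟩
  · intro p q hpq hcop hα hx₂q
    rw [Sset_eq_phaseBands_of_eq_div hx0 hx hcop hα hx₂q,
      phaseBands_natCast_mul_one_eq (Nat.zero_lt_of_lt hpq)]
    exact ⟨Ymap_self_of_eq_div hx0 hx hpq hcop hα hx₂q, rfl⟩
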